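/- arXiv:2009.10457 — 2 statements merged into one kernel-verified Lean document; each statement's English description precedes it below -/
import Mathlib

section
/- Let γ: (0,1] → (0,∞) be a continuous non-decreasing function with lim_{c→0+} γ(c) = 0. Then there exists a C¹ function g: [0,1] → [0,1] with g(0)=0, g'(0)=0, g strictly increasing on [0,1], g'(c) > 0 for c ∈ (0,1], g(c) ≤ γ(c) and g'(c) ≤ γ(c) for all c ∈ (0, 1/8), and g(c) = c for c ∈ [1/2, 1]. -/
open Set Filter Topology

/-!
Let `h(t) = min (γ t) t` on `(0, 1]`. Its primitive `G(c) = ∫₀ᶜ h` is `C¹` with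
`0 < G' = h ≤ γ`, `G(c) ≤ c`, and, `γ` being non-decreasing, `G(c) ≤ c γ(c) ≤ γ(c)`.
Take `g = G + (id - G) σ` for a smooth step `σ` rising from `0` at `1/8` to `1` at `1/2`.
Then `g = G` below `1/8`, `g = id` above `1/2`, and `g'` is a convex combination of
`G' > 0` and `1` plus the nonnegative term `(c - G c) σ'(c)`.
-/

noncomputable def smoothStep (a b x : ℝ) : ℝ := Real.smoothTransition ((x - a) / (b - a))

section SmoothStep

variable {a b x : ℝ}

lemma smoothStep_of_le (hab : a ≤ b) (hx : x ≤ a) : smoothStep a b x = 0 :=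
  Real.smoothTransition.zero_of_nonpos (div_nonpos_of_nonpos_of_nonneg (by linarith) (by linarith))

lemma smoothStep_of_ge (hab : a < b) (hx : b ≤ x) : smoothStep a b x = 1 :=
  Real.smoothTransition.one_of_one_le ((one_le_div (by linarith)).2 (by linarith))

lemma smoothStep_nonneg : 0 ≤ smoothStep a b x := Real.smoothTransition.nonneg _

lemma smoothStep_le_one : smoothStep a b x ≤ 1 := Real.smoothTransition.le_one _

lemma monotone_smoothStep (hab : a ≤ b) : Monotone (smoothStep a b) := fun _ _ hxy =>
  Real.smoothTransition.monotone (div_le_div_of_nonneg_right (by linarith) (by linarith))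

lemma contDiff_smoothStep {n : ℕ∞} : ContDiff ℝ n (smoothStep a b) :=
  Real.smoothTransition.contDiff.comp (by fun_prop)

end SmoothStep

noncomputable def smoothBlend (f₀ f₁ : ℝ → ℝ) (a b x : ℝ) : ℝ :=
  f₀ x + (f₁ x - f₀ x) * smoothStep a b x

section SmoothBlend

variable {f₀ f₁ : ℝ → ℝ} {a b x : ℝ}

lemma smoothBlend_of_le (hab : a ≤ b) (hx : x ≤ a) : smoothBlend f₀ f₁ a b x = f₀ x := by
  simp [smoothBlend, smoothStep_of_le hab hx]

lemma smoothBlend_of_ge (hab : a < b) (hx : b ≤ x) : smoothBlend f₀ f₁ a b x = f₁ x := by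
  simp [smoothBlend, smoothStep_of_ge hab hx]

lemma smoothBlend_eventuallyEq_of_lt (hab : a ≤ b) (hx : x < a) :
    smoothBlend f₀ f₁ a b =ᶠ[𝓝 x] f₀ :=
  eventually_of_mem (Iio_mem_nhds hx) fun _ hy => smoothBlend_of_le hab (le_of_lt hy)

lemma contDiff_smoothBlend {n : ℕ∞} (h₀ : ContDiff ℝ n f₀) (h₁ : ContDiff ℝ n f₁) :
    ContDiff ℝ n (smoothBlend f₀ f₁ a b) :=
  h₀.add ((h₁.sub h₀).mul contDiff_smoothStep)

lemma deriv_smoothBlend_pos {f₀' f₁' : ℝ} (hab : a ≤ b) (h₀ : HasDerivAt f₀ f₀' x)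
    (h₁ : HasDerivAt f₁ f₁' x) (hf₀' : 0 < f₀') (hf₁' : 0 < f₁')
    (hle : f₀ x ≤ f₁ x) : 0 < deriv (smoothBlend f₀ f₁ a b) x := by
  set s := smoothStep a b
  have hs : HasDerivAt s (deriv s x) x :=
    ((contDiff_smoothStep (n := 1)).differentiable one_ne_zero x).hasDerivAt
  have hs' : 0 ≤ deriv s x := (monotone_smoothStep hab).deriv_nonneg
  have hs0 : 0 ≤ s x := smoothStep_nonneg
  have hs1 : s x ≤ 1 := smoothStep_le_one
  rw [show smoothBlend f₀ f₁ a b = f₀ + (f₁ - f₀) * s from rfl,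
    (h₀.add ((h₁.sub h₀).mul hs)).deriv]
  have hconvex : 0 < (1 - s x) * f₀' + s x * f₁' := by
    rcases hs1.eq_or_lt with h | h
    · simp [h, hf₁']
    · exact add_pos_of_pos_of_nonneg (by nlinarith) (by positivity)
  simp only [Pi.sub_apply]
  nlinarith [mul_nonneg (sub_nonneg.2 hle) hs']

end SmoothBlend

lemma intervalIntegral_le_of_nonneg_of_le {f : ℝ → ℝ} {a b M : ℝ} (hab : a ≤ b)
    (hf₀ : ∀ t ∈ Ioc a b, 0 ≤ f t) (hfM : ∀ t ∈ Ioc a b, f t ≤ M) :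
    ∫ t in a..b, f t ≤ M * (b - a) := by
  have hnorm := intervalIntegral.norm_integral_le_of_norm_le_const (C := M) fun t ht => by
    rw [uIoc_of_le hab] at ht
    rw [Real.norm_of_nonneg (hf₀ t ht)]
    exact hfM t ht
  rw [abs_of_nonneg (sub_nonneg.2 hab)] at hnorm
  exact (le_abs_self _).trans hnorm

/-- `min (γ t) t`, extended by `0` to `t ≤ 0` and read through `γ (min t 1)` beyond `1`, so that
it is continuous on `ℝ` although `γ` is only controlled on `(0, 1]`. -/
noncomputable def minProfile (γ : ℝ → ℝ) (t : ℝ) : ℝ := max 0 (min (γ (min t 1)) t)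

section MinProfile

variable {γ : ℝ → ℝ} {t : ℝ}

lemma minProfile_nonneg : 0 ≤ minProfile γ t := le_max_left _ _

lemma minProfile_le_max_zero : minProfile γ t ≤ max 0 t :=
  max_le_max le_rfl (min_le_right _ _)

lemma minProfile_of_nonpos (ht : t ≤ 0) : minProfile γ t = 0 :=
  le_antisymm (minProfile_le_max_zero.trans_eq (max_eq_left ht)) minProfile_nonneg

lemma minProfile_pos (hγ : ∀ c ∈ Ioc (0 : ℝ) 1, 0 < γ c) (ht : 0 < t) :
    0 < minProfile γ t :=
  lt_max_of_lt_right (lt_min (hγ _ ⟨lt_min ht one_pos, min_le_right _ _⟩) ht)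

lemma minProfile_le (ht : t ≤ 1) (hγt : 0 ≤ γ t) : minProfile γ t ≤ γ t := by
  rw [minProfile, min_eq_left ht]
  exact max_le hγt (min_le_left _ _)

lemma continuous_minProfile (hγ : ContinuousOn γ (Ioc 0 1)) : Continuous (minProfile γ) := by
  refine continuous_iff_continuousAt.2 fun t => ?_
  rcases le_or_gt t 0 with ht | ht
  · have hmax : Tendsto (fun y : ℝ => max 0 y) (𝓝 t) (𝓝 0) := by
      simpa [max_eq_left ht] using ((continuous_const (y := (0 : ℝ))).max continuous_id).tendsto t
    rw [ContinuousAt, minProfile_of_nonpos ht]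
    exact squeeze_zero (fun _ => minProfile_nonneg) (fun _ => minProfile_le_max_zero) hmax
  · have hγ' : ContinuousOn (fun y => γ (min y 1)) (Ioi 0) :=
      hγ.comp (continuous_id.min continuous_const).continuousOn
        fun y hy => ⟨lt_min hy one_pos, min_le_right _ _⟩
    exact (continuousOn_const.sup (hγ'.inf continuousOn_id)).continuousAt (Ioi_mem_nhds ht)

lemma integral_minProfile_le_self {c : ℝ} (hc : c ∈ Icc (0 : ℝ) 1) :
    ∫ t in (0 : ℝ)..c, minProfile γ t ≤ c := by
  simpa using intervalIntegral_le_of_nonneg_of_le hc.1 (fun _ _ => minProfile_nonneg) fun t ht =>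
    minProfile_le_max_zero.trans (max_le zero_le_one (ht.2.trans hc.2))

lemma integral_minProfile_le_apply (hγmono : MonotoneOn γ (Ioc 0 1))
    (hγ : ∀ c ∈ Ioc (0 : ℝ) 1, 0 < γ c) {c : ℝ} (hc : c ∈ Ioc (0 : ℝ) 1) :
    ∫ t in (0 : ℝ)..c, minProfile γ t ≤ γ c := by
  have hbound : ∀ t ∈ Ioc 0 c, minProfile γ t ≤ γ c := fun t ht =>
    have ht1 : t ∈ Ioc (0 : ℝ) 1 := ⟨ht.1, ht.2.trans hc.2⟩
    (minProfile_le ht1.2 (hγ t ht1).le).trans (hγmono ht1 hc ht.2)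
  calc ∫ t in (0 : ℝ)..c, minProfile γ t ≤ γ c * (c - 0) :=
        intervalIntegral_le_of_nonneg_of_le hc.1.le (fun _ _ => minProfile_nonneg) hbound
    _ ≤ γ c := by rw [sub_zero]; exact mul_le_of_le_one_right (hγ c hc).le hc.2

lemma hasDerivAt_integral_minProfile (hγ : ContinuousOn γ (Ioc 0 1)) (c : ℝ) :
    HasDerivAt (fun x => ∫ t in (0 : ℝ)..x, minProfile γ t) (minProfile γ c) c :=
  ((continuous_minProfile hγ).integral_hasStrictDerivAt 0 c).hasDerivAt

lemma contDiff_integral_minProfile (hγ : ContinuousOn γ (Ioc 0 1)) :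
    ContDiff ℝ 1 fun x => ∫ t in (0 : ℝ)..x, minProfile γ t := by
  have hderiv := hasDerivAt_integral_minProfile hγ
  refine contDiff_one_iff_deriv.2 ⟨fun c => (hderiv c).differentiableAt, ?_⟩
  rw [funext fun c => (hderiv c).deriv]
  exact continuous_minProfile hγ

end MinProfile

theorem smoothing_lemma_general (γ : ℝ → ℝ)
    (hγcont : ContinuousOn γ (Ioc (0 : ℝ) 1))
    (hγmono : MonotoneOn γ (Ioc (0 : ℝ) 1))
    (hγpos : ∀ c ∈ Ioc (0 : ℝ) 1, 0 < γ c) :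
    ∃ g : ℝ → ℝ,
      ContDiffOn ℝ 1 g (Icc (0 : ℝ) 1) ∧
      (∀ x ∈ Icc (0 : ℝ) 1, g x ∈ Icc (0 : ℝ) 1) ∧
      g 0 = 0 ∧
      deriv g 0 = 0 ∧
      StrictMonoOn g (Icc (0 : ℝ) 1) ∧
      (∀ c ∈ Ioc (0 : ℝ) 1, 0 < deriv g c) ∧
      (∀ c ∈ Ioo (0 : ℝ) (1 / 8), g c ≤ γ c ∧ deriv g c ≤ γ c) ∧
      (∀ c ∈ Icc (1 / 2 : ℝ) 1, g c = c) := by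
  set G := fun c => ∫ t in (0 : ℝ)..c, minProfile γ t
  have hG : ∀ c, HasDerivAt G (minProfile γ c) c := hasDerivAt_integral_minProfile hγcont
  set g := smoothBlend G id (1 / 8) (1 / 2)
  have hg_eq_G : ∀ c < 1 / 8, g =ᶠ[𝓝 c] G := fun c hc =>
    smoothBlend_eventuallyEq_of_lt (by norm_num) hc
  have hg_id : ∀ c, 1 / 2 ≤ c → g c = c := fun c hc => smoothBlend_of_ge (by norm_num) hc
  have hg0 : g 0 = 0 := (hg_eq_G 0 (by norm_num)).eq_of_nhds.trans intervalIntegral.integral_same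
  have hC1 : ContDiff ℝ 1 g :=
    contDiff_smoothBlend (contDiff_integral_minProfile hγcont) contDiff_id
  have hderiv_pos : ∀ c ∈ Ioc (0 : ℝ) 1, 0 < deriv g c := fun c hc =>
    deriv_smoothBlend_pos (by norm_num) (hG c) (hasDerivAt_id c) (minProfile_pos hγpos hc.1)
      one_pos (integral_minProfile_le_self (Ioc_subset_Icc_self hc))
  have hmono : StrictMonoOn g (Icc 0 1) :=
    strictMonoOn_of_deriv_pos (convex_Icc 0 1) hC1.continuous.continuousOn fun c hc =>
      hderiv_pos c (Ioo_subset_Ioc_self (by rwa [interior_Icc] at hc))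
  refine ⟨g, hC1.contDiffOn, fun x hx => ?_, hg0, ?_, hmono, hderiv_pos, fun c hc => ?_,
    fun c hc => hg_id c hc.1⟩
  · simpa [hg0, hg_id 1 (by norm_num)] using hmono.monotoneOn.mapsTo_Icc hx
  · rw [(hg_eq_G 0 (by norm_num)).deriv_eq, (hG 0).deriv, minProfile_of_nonpos le_rfl]
  · have hc1 : c ∈ Ioc (0 : ℝ) 1 := ⟨hc.1, by linarith [hc.2]⟩
    rw [(hg_eq_G c hc.2).eq_of_nhds, (hg_eq_G c hc.2).deriv_eq, (hG c).deriv]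
    exact ⟨integral_minProfile_le_apply hγmono hγpos hc1, minProfile_le hc1.2 (hγpos c hc1).le⟩

theorem smoothing_lemma (γ : ℝ → ℝ)
    (hγcont : ContinuousOn γ (Ioc (0 : ℝ) 1))
    (hγmono : MonotoneOn γ (Ioc (0 : ℝ) 1))
    (hγpos : ∀ c ∈ Ioc (0 : ℝ) 1, 0 < γ c)
    (hγlim : Tendsto γ (nhdsWithin 0 (Ioc (0 : ℝ) 1)) (nhds 0)) :
    ∃ g : ℝ → ℝ,
      ContDiffOn ℝ 1 g (Icc (0 : ℝ) 1) ∧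
      (∀ x ∈ Icc (0 : ℝ) 1, g x ∈ Icc (0 : ℝ) 1) ∧
      g 0 = 0 ∧
      deriv g 0 = 0 ∧
      StrictMonoOn g (Icc (0 : ℝ) 1) ∧
      (∀ c ∈ Ioc (0 : ℝ) 1, 0 < deriv g c) ∧
      (∀ c ∈ Ioo (0 : ℝ) (1 / 8), g c ≤ γ c ∧ deriv g c ≤ γ c) ∧
      (∀ c ∈ Icc (1 / 2 : ℝ) 1, g c = c) :=
  smoothing_lemma_general γ hγcont hγmono hγpos
end

section
/- Let U ⊆ ℝⁿ, K ⊆ U closed, a ∈ K, and d a metric on U. Let φ: U → [0,1] be continuous with φ^{-1}(0) = K, and g: [0,1] → [0,1] with g(0)=0 and g(c) ≤ d(φ^{-1}(c), K)² (the squared distance from the level set to K) for all small c > 0. Then ψ = g ∘ φ satisfies lim_{w→a} ψ(w)/d(w,a) = 0; in particular ψ is differentiable at a with zero derivative (in the direction of the metric). -/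
/-!
A point `w` with `φ w = c` lies at distance at least `r c := d(φ⁻¹{c}, K)` from `a ∈ K`, so for
`w ∉ K` near `a` we get `g (φ w) ≤ r (φ w) ^ 2 ≤ dist w a ^ 2`, hence `g (φ w) / dist w a ≤ dist w a → 0`.
-/

open Set Filter Topology

section LevelSetDistance

variable {X : Type*} [PseudoMetricSpace X]

theorem sInf_dist_levelSet_nonneg (φ : X → ℝ) (K : Set X) (c : ℝ) :
    0 ≤ sInf {d : ℝ | ∃ s ∈ φ ⁻¹' {c}, ∃ k ∈ K, d = dist s k} :=
  Real.sInf_nonneg fun _ ⟨_, _, _, _, hd⟩ => hd ▸ dist_nonneg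

theorem sInf_dist_levelSet_le_dist {φ : X → ℝ} {K : Set X} {w a : X} (ha : a ∈ K) :
    sInf {d : ℝ | ∃ s ∈ φ ⁻¹' {φ w}, ∃ k ∈ K, d = dist s k} ≤ dist w a :=
  csInf_le ⟨0, fun _ ⟨_, _, _, _, hd⟩ => hd ▸ dist_nonneg⟩ ⟨w, rfl, a, ha, rfl⟩

theorem sq_sInf_dist_levelSet_le_sq_dist {φ : X → ℝ} {K : Set X} {w a : X} (ha : a ∈ K) :
    sInf {d : ℝ | ∃ s ∈ φ ⁻¹' {φ w}, ∃ k ∈ K, d = dist s k} ^ 2 ≤ dist w a ^ 2 :=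
  pow_le_pow_left₀ (sInf_dist_levelSet_nonneg φ K (φ w)) (sInf_dist_levelSet_le_dist ha) 2

/-- Where `dist w a = 0` the quotient is `0` by the convention `x / 0 = 0`, so no `w ≠ a` is needed. -/
theorem tendsto_div_dist_zero_of_le_sq_dist {f : X → ℝ} {a : X} {l : Filter X} (hl : l ≤ 𝓝 a)
    (hf_nonneg : ∀ᶠ w in l, 0 ≤ f w) (hf_le : ∀ᶠ w in l, f w ≤ dist w a ^ 2) :
    Tendsto (fun w => f w / dist w a) l (𝓝 0) := by
  have hdist : Tendsto (fun w => dist w a) l (𝓝 0) :=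
    (tendsto_iff_dist_tendsto_zero.mp tendsto_id).mono_left hl
  refine squeeze_zero' (hf_nonneg.mono fun w hw => div_nonneg hw dist_nonneg) ?_ hdist
  filter_upwards [hf_le] with w hw
  exact div_le_of_le_mul₀ dist_nonneg dist_nonneg (by rwa [← sq])

end LevelSetDistance

theorem psi_little_o_of_dist_general {X : Type*} [MetricSpace X]
    (K : Set X)
    (φ : X → ℝ) (hφcont : Continuous φ)
    (hφ01 : ∀ w, φ w ∈ Icc (0 : ℝ) 1)
    (hφK : φ ⁻¹' {0} = K)
    (g : ℝ → ℝ)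
    (hgnonneg : ∀ c ∈ Icc (0 : ℝ) 1, 0 ≤ g c)
    (δ : ℝ) (hδ : 0 < δ)
    (hg : ∀ c ∈ Ioo (0 : ℝ) δ,
      g c ≤ (sInf {d : ℝ | ∃ s ∈ φ ⁻¹' {c}, ∃ k ∈ K, d = dist s k}) ^ 2)
    (a : X) (ha : a ∈ K) :
    Tendsto (fun w => g (φ w) / dist w a) (nhdsWithin a Kᶜ) (nhds 0) := by
  have hφa : φ a = 0 := by rwa [← hφK] at ha
  have hφ_lt : ∀ᶠ w in 𝓝[Kᶜ] a, φ w < δ :=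
    mem_nhdsWithin_of_mem_nhds <| (isOpen_lt hφcont continuous_const).mem_nhds (show φ a < δ by rwa [hφa])
  have hφ_pos : ∀ᶠ w in 𝓝[Kᶜ] a, 0 < φ w := by
    filter_upwards [self_mem_nhdsWithin] with w hwK
    exact (hφ01 w).1.lt_of_ne fun h => hwK (hφK ▸ h.symm)
  refine tendsto_div_dist_zero_of_le_sq_dist nhdsWithin_le_nhds
    (Eventually.of_forall fun w => hgnonneg _ (hφ01 w)) ?_
  filter_upwards [hφ_lt, hφ_pos] with w hw_lt hw_pos
  exact (hg _ ⟨hw_pos, hw_lt⟩).trans (sq_sInf_dist_levelSet_le_sq_dist ha)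

theorem psi_little_o_of_dist {X : Type*} [MetricSpace X]
    (K : Set X) (hK : IsClosed K) (hKne : K.Nonempty)
    (φ : X → ℝ) (hφcont : Continuous φ)
    (hφ01 : ∀ w, φ w ∈ Icc (0 : ℝ) 1)
    (hφK : φ ⁻¹' {0} = K)
    (g : ℝ → ℝ) (hg0 : g 0 = 0)
    (hgnonneg : ∀ c ∈ Icc (0 : ℝ) 1, 0 ≤ g c)
    (δ : ℝ) (hδ : 0 < δ)
    (hg : ∀ c ∈ Ioo (0 : ℝ) δ,
      g c ≤ (sInf {d : ℝ | ∃ s ∈ φ ⁻¹' {c}, ∃ k ∈ K, d = dist s k}) ^ 2)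
    (a : X) (ha : a ∈ K) :
    Tendsto (fun w => g (φ w) / dist w a) (nhdsWithin a Kᶜ) (nhds 0) :=
  psi_little_o_of_dist_general K φ hφcont hφ01 hφK g hgnonneg δ hδ hg a ha
end
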